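/- (Corollary, hinge loss.) Let c ∈ (0, 1/2), K ≥ 2, let X be a measurable space, P a probability measure on X × {1,…,K}, and g : X → ℝ^K a measurable score function with finite cost-sensitive hinge surrogate risk. With the hinge loss φ_hin(z) = max(0, 1 − z): R01c(f(·; g)) − R01c* ≤ R_CS^{φ_hin}(g) − R_CS^{φ_hin,*}. -/

import Mathlib

open Classical MeasureTheory

/-- The discrete σ-algebra on decisions (`none` = rejection ®). -/
instance {K : ℕ} : MeasurableSpace (Option (Fin K)) := ⊤

/-- The margin zero-one loss: `ℓ01(z) = 1` if `z ≤ 0` and `0` otherwise. -/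
noncomputable def mloss01 (z : ℝ) : ℝ := if z ≤ 0 then 1 else 0

/-- The cost-sensitive surrogate loss `L_CS^φ(g, y) = c·φ(g_y) + (1−c)·∑_{y'≠y} φ(−g_{y'})`. -/
noncomputable def LCS {K : ℕ} (φ : ℝ → ℝ) (c : ℝ) (g : Fin K → ℝ) (y : Fin K) : ℝ :=
  c * φ (g y) + (1 - c) * ∑ y' ∈ Finset.univ.erase y, φ (-(g y'))

/-- The decision rule induced by a score vector `g`: reject (`none`) if
`max_y g_y ≤ 0` or if two distinct coordinates of `g` are strictly positive,
otherwise output the unique class `y` with `g_y > 0`. -/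
noncomputable def decRule {K : ℕ} (g : Fin K → ℝ) : Option (Fin K) :=
  if h : ∃! y, 0 < g y then some h.choose else none

/-- The zero-one-c loss of a decision (`none` = rejection ®) against a label `y`:
`c` for rejection, `0` for the correct class, `1` for a wrong class. -/
noncomputable def loss01c {K : ℕ} (c : ℝ) (y : Fin K) : Option (Fin K) → ℝ
  | none => c
  | some z => if z = y then 0 else 1

/-- The zero-one-c risk of a decision rule `h` under `P`:
`R01c(h) = E_{(x,y)∼P}[ℓ01c(h(x), y)]`. -/
noncomputable def R01c {X : Type*} [MeasurableSpace X] {K : ℕ} (c : ℝ)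
    (P : Measure (X × Fin K)) (h : X → Option (Fin K)) : ℝ :=
  ∫ p, loss01c c p.2 (h p.1) ∂P

/-- The Bayes zero-one-c risk: the infimum of `R01c` over measurable decision rules. -/
noncomputable def R01cStar (X : Type*) [MeasurableSpace X] (K : ℕ) (c : ℝ)
    (P : Measure (X × Fin K)) : ℝ :=
  sInf {r : ℝ | ∃ h : X → Option (Fin K), Measurable h ∧ r = R01c c P h}

/-- The cost-sensitive surrogate risk `R_CS^φ(g) = E_{(x,y)∼P}[L_CS^φ(g(x), y)]`. -/
noncomputable def RCS {X : Type*} [MeasurableSpace X] {K : ℕ} (φ : ℝ → ℝ) (c : ℝ)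
    (P : Measure (X × Fin K)) (g : X → Fin K → ℝ) : ℝ :=
  ∫ p, LCS φ c (g p.1) p.2 ∂P

/-- The infimum of the cost-sensitive surrogate risk over measurable score functions. -/
noncomputable def RCSStar (X : Type*) [MeasurableSpace X] (K : ℕ) (φ : ℝ → ℝ) (c : ℝ)
    (P : Measure (X × Fin K)) : ℝ :=
  sInf {r : ℝ | ∃ g : X → Fin K → ℝ, Measurable g ∧ r = RCS φ c P g}

/-- The one-versus-rest cost-sensitive binary `φ`-risk of class `i`:
`R^{φ,i}_{1−c}(u) = E[c·1[y = i]·φ(u(x)) + (1−c)·1[y ≠ i]·φ(−u(x))]`. -/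
noncomputable def Rbin {X : Type*} [MeasurableSpace X] {K : ℕ} (φ : ℝ → ℝ) (c : ℝ)
    (P : Measure (X × Fin K)) (i : Fin K) (u : X → ℝ) : ℝ :=
  ∫ p, (if p.2 = i then c * φ (u p.1) else (1 - c) * φ (-(u p.1))) ∂P

/-- The infimum of the one-versus-rest cost-sensitive binary `φ`-risk of class `i`
over measurable functions. -/
noncomputable def RbinStar (X : Type*) [MeasurableSpace X] (K : ℕ) (φ : ℝ → ℝ) (c : ℝ)
    (P : Measure (X × Fin K)) (i : Fin K) : ℝ :=
  sInf {r : ℝ | ∃ u : X → ℝ, Measurable u ∧ r = Rbin φ c P i u}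

/-- The hinge loss `φ_hin(z) = max(0, 1 − z)`. -/
noncomputable def hinge (z : ℝ) : ℝ := max 0 (1 - z)

/-!
Disintegrating `P` into its marginal on `X` and the conditional class probabilities `η`, both
regrets become integrals over `X` of conditional regrets, so it suffices to compare these
pointwise. Given `∑ η = 1`, the conditional cost-sensitive surrogate risk of a score vector `v`
is a sum of binary hinge risks `c η_i hinge (v_i) + (1 - c)(1 - η_i) hinge (-v_i)`. Each is
minimised, with value `2 min (c η_i) ((1 - c)(1 - η_i))`, at `v_i = ±1`, and a score whose sign
disagrees with `η_i ≥ 1 - c` costs at least `|η_i - (1 - c)|` of binary regret. A case analysis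
on `decRule v` bounds the conditional zero-one-c risk of `decRule v` by that of an arbitrary
decision plus the sum of these binary regrets; `c ≤ 1/2` is needed when two scores are positive,
where it combines with `η_i + η_j ≤ 1`. Comparing with an arbitrary measurable decision rule,
rather than a Bayes rule, avoids having to select a Bayes decision measurably.
-/

open ProbabilityTheory Finset

lemma hinge_nonneg (z : ℝ) : 0 ≤ hinge z := le_max_left _ _

lemma sub_le_hinge (z : ℝ) : 1 - z ≤ hinge z := le_max_right _ _

lemma hinge_le_two {z : ℝ} (hz : -1 ≤ z) : hinge z ≤ 2 := max_le (by norm_num) (by linarith)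

lemma hinge_one : hinge 1 = 0 := by norm_num [hinge]

lemma hinge_neg_one : hinge (-1) = 2 := by norm_num [hinge]

@[fun_prop]
lemma continuous_hinge : Continuous hinge := by unfold hinge; fun_prop

noncomputable def hingeCondRisk (p q u : ℝ) : ℝ := p * hinge u + q * hinge (-u)

noncomputable def hingeMinimizer (p q : ℝ) : ℝ := if q ≤ p then 1 else -1

section HingeCondRisk

variable {p q : ℝ}

lemma hingeCondRisk_hingeMinimizer : hingeCondRisk p q (hingeMinimizer p q) = 2 * min p q := by
  unfold hingeCondRisk hingeMinimizer
  split_ifs with h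
  · rw [hinge_one, hinge_neg_one, min_eq_right h]; ring
  · rw [neg_neg, hinge_one, hinge_neg_one, min_eq_left (not_le.1 h).le]; ring

lemma two_mul_min_le_hingeCondRisk (hp : 0 ≤ p) (hq : 0 ≤ q) (u : ℝ) :
    2 * min p q ≤ hingeCondRisk p q u := by
  have hm : 0 ≤ min p q := le_min hp hq
  have h2 : 2 ≤ hinge u + hinge (-u) := by linarith [sub_le_hinge u, sub_le_hinge (-u)]
  calc 2 * min p q ≤ min p q * hinge u + min p q * hinge (-u) := by nlinarith
    _ ≤ hingeCondRisk p q u :=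
      add_le_add (mul_le_mul_of_nonneg_right (min_le_left p q) (hinge_nonneg u))
        (mul_le_mul_of_nonneg_right (min_le_right p q) (hinge_nonneg (-u)))

lemma hingeCondRisk_of_nonpos (hp : 0 ≤ p) (hq : 0 ≤ q) {u : ℝ} (hu : u ≤ 0) :
    p - q + 2 * min p q ≤ hingeCondRisk p q u := by
  rcases le_total q p with hqp | hpq
  · have h1 := mul_le_mul_of_nonneg_left (sub_le_hinge u) hp
    have h2 := mul_le_mul_of_nonneg_left (sub_le_hinge (-u)) hq
    rw [min_eq_right hqp]
    unfold hingeCondRisk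
    nlinarith [mul_nonneg (neg_nonneg.2 hu) (sub_nonneg.2 hqp)]
  · linarith [two_mul_min_le_hingeCondRisk hp hq u, min_eq_left hpq]

lemma hingeCondRisk_of_nonneg (hp : 0 ≤ p) (hq : 0 ≤ q) {u : ℝ} (hu : 0 ≤ u) :
    q - p + 2 * min p q ≤ hingeCondRisk p q u := by
  have h := hingeCondRisk_of_nonpos hq hp (neg_nonpos.2 hu)
  rw [min_comm] at h
  calc q - p + 2 * min p q ≤ hingeCondRisk q p (-u) := h
    _ = hingeCondRisk p q u := by unfold hingeCondRisk; rw [neg_neg]; ring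

end HingeCondRisk

section Multiclass

variable {K : ℕ} {c : ℝ} {η : Fin K → ℝ}

lemma sum_mul_LCS (φ : ℝ → ℝ) (hsum : ∑ i, η i = 1) (v : Fin K → ℝ) :
    ∑ i, η i * LCS φ c v i
      = ∑ i, (c * η i * φ (v i) + (1 - c) * (1 - η i) * φ (-v i)) := by
  set S := ∑ j, φ (-v j)
  have h : ∀ i, η i * LCS φ c v i = c * η i * φ (v i) + (1 - c) * (1 - η i) * φ (-v i)
      + (1 - c) * (η i * S - φ (-v i)) := by
    intro i
    rw [LCS, sum_erase_eq_sub (mem_univ i)]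
    ring
  rw [sum_congr rfl fun i _ => h i, sum_add_distrib, ← mul_sum, sum_sub_distrib, ← sum_mul,
    hsum]
  simp [S]

lemma LCS_nonneg {φ : ℝ → ℝ} (hφ : ∀ z, 0 ≤ φ z) (hc0 : 0 ≤ c) (hc1 : c ≤ 1)
    (v : Fin K → ℝ) (i : Fin K) : 0 ≤ LCS φ c v i :=
  add_nonneg (mul_nonneg hc0 (hφ _)) (mul_nonneg (by linarith) (sum_nonneg fun j _ => hφ _))

lemma LCS_le {φ : ℝ → ℝ} (hφ : ∀ z, 0 ≤ φ z) (hc0 : 0 ≤ c) (hc1 : c ≤ 1)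
    (v : Fin K → ℝ) (i : Fin K) : LCS φ c v i ≤ φ (v i) + ∑ j, φ (-v j) := by
  have h1 : c * φ (v i) ≤ φ (v i) := mul_le_of_le_one_left (hφ _) hc1
  have h2 : ∑ j ∈ univ.erase i, φ (-v j) ≤ ∑ j, φ (-v j) :=
    sum_le_sum_of_subset_of_nonneg (erase_subset i univ) fun j _ _ => hφ _
  have h3 : (1 - c) * ∑ j ∈ univ.erase i, φ (-v j) ≤ ∑ j ∈ univ.erase i, φ (-v j) :=
    mul_le_of_le_one_left (sum_nonneg fun j _ => hφ _) (by linarith)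
  rw [LCS]
  linarith

lemma continuous_LCS_hinge (c : ℝ) (i : Fin K) :
    Continuous fun v : Fin K → ℝ => LCS hinge c v i := by
  unfold LCS
  fun_prop

lemma sum_mul_loss01c_none (hsum : ∑ i, η i = 1) : ∑ i, η i * loss01c c i none = c := by
  simp [loss01c, ← sum_mul, hsum]

lemma sum_mul_loss01c_some (hsum : ∑ i, η i = 1) (z : Fin K) :
    ∑ i, η i * loss01c c i (some z) = 1 - η z := by
  have h : ∀ i, η i * loss01c c i (some z) = η i - if z = i then η i else 0 := by
    intro i
    simp only [loss01c]
    split_ifs <;> ring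
  rw [sum_congr rfl fun i _ => h i, sum_sub_distrib, sum_ite_eq, if_pos (mem_univ z), hsum]

lemma abs_loss01c_le_one (hc0 : 0 ≤ c) (hc1 : c ≤ 1) (y : Fin K) (d : Option (Fin K)) :
    |loss01c c y d| ≤ 1 := by
  rcases d with _ | z
  · rwa [loss01c, abs_of_nonneg hc0]
  · simp only [loss01c]
    split_ifs <;> norm_num

lemma decRule_eq_some_iff {v : Fin K → ℝ} {z : Fin K} :
    decRule v = some z ↔ 0 < v z ∧ ∀ j, j ≠ z → v j ≤ 0 := by
  unfold decRule
  split_ifs with h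
  · rw [Option.some_inj]
    constructor
    · rintro rfl
      exact ⟨h.choose_spec.1, fun j hj => not_lt.1 fun hpos => hj (h.choose_spec.2 j hpos)⟩
    · rintro ⟨hz, -⟩
      exact (h.choose_spec.2 z hz).symm
  · simp only [false_iff, not_and, not_forall, not_le]
    intro hz
    by_contra! hle
    exact h ⟨z, hz, fun j hj => by_contra fun hjz => (hle j hjz).not_gt hj⟩

lemma measurable_decRule : Measurable (decRule : (Fin K → ℝ) → Option (Fin K)) := by
  have hsome : ∀ z : Fin K, MeasurableSet {v : Fin K → ℝ | decRule v = some z} := by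
    intro z
    simp_rw [decRule_eq_some_iff, Set.ofPred_and, Set.ofPred_forall]
    refine (measurableSet_lt measurable_const (measurable_pi_apply z)).inter
      (.iInter fun j => .iInter fun _ => measurableSet_le (measurable_pi_apply j) measurable_const)
  refine measurable_to_countable' fun d => ?_
  rcases d with _ | z
  · have h : decRule ⁻¹' {none} = ⋂ z : Fin K, {v | decRule v = some z}ᶜ := by
      ext v
      simp [Option.eq_none_iff_forall_ne_some]
    rw [h]
    exact .iInter fun z => (hsome z).compl
  · exact hsome z

end Multiclass

section Pointwise

variable {K : ℕ} {c : ℝ} {η : Fin K → ℝ}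

theorem sum_mul_loss01c_decRule_le (hc : c ≤ 1 / 2) (hη : ∀ i, 0 ≤ η i)
    (hsum : ∑ i, η i = 1) {v r : Fin K → ℝ} (hr : ∀ i, 0 ≤ r i)
    (hneg : ∀ i, v i ≤ 0 → η i - (1 - c) ≤ r i)
    (hpos : ∀ i, 0 ≤ v i → 1 - c - η i ≤ r i) (d : Option (Fin K)) :
    ∑ i, η i * loss01c c i (decRule v) ≤ ∑ i, η i * loss01c c i d + ∑ i, r i := by
  have hr_le : ∀ i, r i ≤ ∑ j, r j := fun i => single_le_sum (fun j _ => hr j) (mem_univ i)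
  have hr_pair : ∀ i j, i ≠ j → r i + r j ≤ ∑ k, r k := fun i j hij =>
    add_le_sum (fun k _ => hr k) (mem_univ i) (mem_univ j) hij
  have hη_pair : ∀ i j, i ≠ j → η i + η j ≤ 1 := fun i j hij =>
    hsum ▸ add_le_sum (fun k _ => hη k) (mem_univ i) (mem_univ j) hij
  rcases hdec : decRule v with _ | z <;> rcases d with _ | w <;>
    simp only [sum_mul_loss01c_none hsum, sum_mul_loss01c_some hsum]
  · linarith [sum_nonneg fun i (_ : i ∈ univ) => hr i]
  · by_cases hw : v w ≤ 0
    · linarith [hneg w hw, hr_le w]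
    obtain ⟨k, hkw, hk⟩ : ∃ k, k ≠ w ∧ 0 < v k := by
      by_contra! h
      exact absurd (decRule_eq_some_iff.2 ⟨not_le.1 hw, h⟩) (by simp [hdec])
    linarith [hpos k hk.le, hr_le k, hη_pair k w hkw]
  · linarith [hpos z (decRule_eq_some_iff.1 hdec).1.le, hr_le z]
  · obtain ⟨hz, hzj⟩ := decRule_eq_some_iff.1 hdec
    rcases eq_or_ne z w with rfl | hzw
    · linarith [sum_nonneg fun i (_ : i ∈ univ) => hr i]
    · linarith [hpos z hz.le, hneg w (hzj w hzw.symm), hr_pair z w hzw]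

theorem sum_mul_loss01c_decRule_add_le (hc0 : 0 ≤ c) (hc : c ≤ 1 / 2) (hη : ∀ i, 0 ≤ η i)
    (hsum : ∑ i, η i = 1) (v : Fin K → ℝ) (d : Option (Fin K)) :
    ∑ i, η i * loss01c c i (decRule v)
        + ∑ i, η i * LCS hinge c (fun j => hingeMinimizer (c * η j) ((1 - c) * (1 - η j))) i
      ≤ ∑ i, η i * loss01c c i d + ∑ i, η i * LCS hinge c v i := by
  have hp : ∀ i, 0 ≤ c * η i := fun i => mul_nonneg hc0 (hη i)
  have hq : ∀ i, 0 ≤ (1 - c) * (1 - η i) := fun i =>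
    mul_nonneg (by linarith) (sub_nonneg.2 (hsum ▸ single_le_sum (fun j _ => hη j) (mem_univ i)))
  have hpq : ∀ i, c * η i - (1 - c) * (1 - η i) = η i - (1 - c) := fun i => by ring
  have key := sum_mul_loss01c_decRule_le hc hη hsum
    (v := v) (r := fun i => hingeCondRisk (c * η i) ((1 - c) * (1 - η i)) (v i)
      - 2 * min (c * η i) ((1 - c) * (1 - η i)))
    (fun i => sub_nonneg.2 (two_mul_min_le_hingeCondRisk (hp i) (hq i) _))
    (fun i hi => by linarith [hingeCondRisk_of_nonpos (hp i) (hq i) hi, hpq i])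
    (fun i hi => by linarith [hingeCondRisk_of_nonneg (hp i) (hq i) hi, hpq i]) d
  rw [sum_sub_distrib] at key
  rw [sum_mul_LCS hinge hsum, sum_mul_LCS hinge hsum]
  simp only [← hingeCondRisk_hingeMinimizer] at key
  unfold hingeCondRisk at key
  linarith

end Pointwise

section CondProb

variable {X Y : Type*} [MeasurableSpace X] [MeasurableSpace Y] [StandardBorelSpace Y]
  [Nonempty Y] (P : Measure (X × Y)) [IsFiniteMeasure P]

noncomputable def condProb (y : Y) (x : X) : ℝ := (P.condKernel x).real {y}

lemma measurable_condProb (y : Y) : Measurable (condProb P y) :=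
  (P.condKernel.measurable_coe (measurableSet_singleton y)).ennreal_toReal

lemma condProb_nonneg (y : Y) (x : X) : 0 ≤ condProb P y x := measureReal_nonneg

variable [Fintype Y]

lemma sum_condProb (x : X) : ∑ y, condProb P y x = 1 := by
  simp [condProb]

lemma integral_condKernel_eq_sum {f : X × Y → ℝ} (x : X) :
    ∫ y, f (x, y) ∂P.condKernel x = ∑ y, condProb P y x * f (x, y) := by
  rw [integral_fintype .of_finite]
  rfl

variable {P}

lemma integrable_sum_condProb_mul {f : X × Y → ℝ} (hf : Integrable f P) :
    Integrable (fun x => ∑ y, condProb P y x * f (x, y)) P.fst := by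
  rw [← P.disintegrate P.condKernel] at hf
  simpa [integral_condKernel_eq_sum] using hf.integral_compProd

lemma integral_eq_integral_sum_condProb {f : X × Y → ℝ} (hf : Integrable f P) :
    ∫ p, f p ∂P = ∫ x, ∑ y, condProb P y x * f (x, y) ∂P.fst := by
  rw [← P.disintegrate P.condKernel] at hf
  conv_lhs => rw [← P.disintegrate P.condKernel]
  simp only [Measure.integral_compProd hf, integral_condKernel_eq_sum]

lemma integral_le_of_sum_condProb_mul_le {f₁ f₂ : X × Y → ℝ} (hf₁ : Integrable f₁ P)
    (hf₂ : Integrable f₂ P)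
    (h : ∀ x, ∑ y, condProb P y x * f₁ (x, y) ≤ ∑ y, condProb P y x * f₂ (x, y)) :
    ∫ p, f₁ p ∂P ≤ ∫ p, f₂ p ∂P := by
  rw [integral_eq_integral_sum_condProb hf₁, integral_eq_integral_sum_condProb hf₂]
  exact integral_mono (integrable_sum_condProb_mul hf₁) (integrable_sum_condProb_mul hf₂) h

end CondProb

lemma integrable_of_measurable_sections_of_abs_le {X Y : Type*} [MeasurableSpace X]
    [MeasurableSpace Y] [Countable Y] [MeasurableSingletonClass Y] {P : Measure (X × Y)}
    [IsFiniteMeasure P] {f : X × Y → ℝ}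
    (hf : ∀ y, Measurable fun x => f (x, y)) (C : ℝ) (hC : ∀ p, |f p| ≤ C) :
    Integrable f P :=
  .of_bound (measurable_from_prod_countable_left hf).aestronglyMeasurable C (ae_of_all _ hC)

section Risks

variable {X : Type*} [MeasurableSpace X] {K : ℕ} [Nonempty (Fin K)]

noncomputable def hingeBayesScore (c : ℝ) (P : Measure (X × Fin K)) [IsFiniteMeasure P]
    (x : X) (i : Fin K) : ℝ :=
  hingeMinimizer (c * condProb P i x) ((1 - c) * (1 - condProb P i x))

variable {c : ℝ} {P : Measure (X × Fin K)} [IsFiniteMeasure P]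

lemma measurable_hingeBayesScore : Measurable (hingeBayesScore c P) :=
  measurable_pi_lambda _ fun i => Measurable.ite
    (measurableSet_le ((measurable_condProb P i).const_sub 1 |>.const_mul _)
      ((measurable_condProb P i).const_mul c))
    measurable_const measurable_const

lemma abs_LCS_hingeBayesScore_le (hc0 : 0 ≤ c) (hc1 : c ≤ 1) (x : X) (i : Fin K) :
    |LCS hinge c (hingeBayesScore c P x) i| ≤ 2 + ∑ _j : Fin K, 2 := by
  have hs : ∀ j, -1 ≤ hingeBayesScore c P x j ∧ hingeBayesScore c P x j ≤ 1 := fun j => by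
    unfold hingeBayesScore hingeMinimizer
    split_ifs <;> norm_num
  rw [abs_of_nonneg (LCS_nonneg hinge_nonneg hc0 hc1 _ i)]
  refine (LCS_le hinge_nonneg hc0 hc1 _ i).trans (add_le_add (hinge_le_two (hs i).1) ?_)
  exact sum_le_sum fun j _ => hinge_le_two (by linarith [(hs j).2])

theorem R01c_decRule_add_RCS_le (hc0 : 0 ≤ c) (hc : c ≤ 1 / 2) {g : X → Fin K → ℝ}
    (hg : Measurable g) (hint : Integrable (fun p : X × Fin K => LCS hinge c (g p.1) p.2) P)
    {h : X → Option (Fin K)} (hh : Measurable h) :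
    R01c c P (fun x => decRule (g x)) + RCS hinge c P (hingeBayesScore c P)
      ≤ R01c c P h + RCS hinge c P g := by
  have hc1 : c ≤ 1 := by linarith
  have hloss : ∀ h' : X → Option (Fin K), Measurable h' →
      Integrable (fun p : X × Fin K => loss01c c p.2 (h' p.1)) P := fun h' hh' =>
    integrable_of_measurable_sections_of_abs_le
      (fun y => (measurable_from_top (f := loss01c c y)).comp hh') 1
      fun _ => abs_loss01c_le_one hc0 hc1 _ _
  have hbayes : Integrable (fun p : X × Fin K => LCS hinge c (hingeBayesScore c P p.1) p.2) P :=
    integrable_of_measurable_sections_of_abs_le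
      (fun i => (continuous_LCS_hinge c i).measurable.comp measurable_hingeBayesScore) _
      fun _ => abs_LCS_hingeBayesScore_le hc0 hc1 _ _
  have hdec : Integrable (fun p : X × Fin K => loss01c c p.2 (decRule (g p.1))) P :=
    hloss _ (measurable_decRule.comp hg)
  rw [R01c, RCS, R01c, RCS, ← integral_add hdec hbayes, ← integral_add (hloss h hh) hint]
  refine integral_le_of_sum_condProb_mul_le (hdec.add hbayes) ((hloss h hh).add hint)
    fun x => ?_
  simp only [mul_add, sum_add_distrib]
  exact sum_mul_loss01c_decRule_add_le hc0 hc (condProb_nonneg P · x) (sum_condProb P x)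
    (g x) (h x)

end Risks

theorem stmt15_general (c : ℝ) (hc0 : 0 < c) (hc : c < 1/2) (K : ℕ)
    (X : Type*) [MeasurableSpace X] (P : Measure (X × Fin K)) [IsProbabilityMeasure P]
    (g : X → Fin K → ℝ) (hg : Measurable g)
    (hint : Integrable (fun p : X × Fin K => LCS hinge c (g p.1) p.2) P) :
    R01c c P (fun x => decRule (g x)) - R01cStar X K c P ≤
      RCS hinge c P g - RCSStar X K hinge c P := by
  have : Nonempty (Fin K) := (nonempty_of_isProbabilityMeasure P).map Prod.snd
  have hRCSStar : RCSStar X K hinge c P ≤ RCS hinge c P (hingeBayesScore c P) := by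
    refine csInf_le ⟨0, ?_⟩ ⟨_, measurable_hingeBayesScore, rfl⟩
    rintro _ ⟨g', -, rfl⟩
    exact integral_nonneg fun p => LCS_nonneg hinge_nonneg hc0.le (by linarith) _ _
  have hR01cStar : R01c c P (fun x => decRule (g x)) + RCS hinge c P (hingeBayesScore c P)
      - RCS hinge c P g ≤ R01cStar X K c P := by
    refine le_csInf ⟨_, fun _ => none, measurable_const, rfl⟩ ?_
    rintro _ ⟨h, hh, rfl⟩
    linarith [R01c_decRule_add_RCS_le hc0.le hc.le hg hint hh]
  linarith

/-- (Corollary, hinge loss.) For a measurable score function `g` with finite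
cost-sensitive hinge surrogate risk, the zero-one-c regret of the induced decision
rule is bounded by the cost-sensitive hinge surrogate regret. -/
theorem stmt15 (c : ℝ) (hc0 : 0 < c) (hc : c < 1/2) (K : ℕ) (hK : 2 ≤ K)
    (X : Type*) [MeasurableSpace X] (P : Measure (X × Fin K)) [IsProbabilityMeasure P]
    (g : X → Fin K → ℝ) (hg : Measurable g)
    (hint : Integrable (fun p : X × Fin K => LCS hinge c (g p.1) p.2) P) :
    R01c c P (fun x => decRule (g x)) - R01cStar X K c P ≤
      RCS hinge c P g - RCSStar X K hinge c P :=
  stmt15_general c hc0 hc K X P g hg hint
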